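/- arXiv:0711.0170 — 2 statements merged into one kernel-verified Lean document; each statement's English description precedes it below -/
import Mathlib

section
/- Let f : 𝔻 → ℂ be analytic with finite Dirichlet integral A, and let B_H(z₀, δ) = {z ∈ 𝔻 : d_H(z₀, z) < δ} be the hyperbolic ball of radius δ about z₀. Then tanh(δ/2) · |f'(z₀)| (1−|z₀|²)/2 ≤ ( (1/(4π)) ∫_{B_H(z₀,δ)} |f'|² dA )^{1/2}. -/
/-! `mobius z₀ w = (w + z₀) / (1 + conj z₀ * w)` is an automorphism of the unit disc with
`mobius z₀ 0 = z₀` and inverse `mobius (-z₀)`, so it maps the disc `|w| < r`, `r = tanh (δ / 2)`,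
onto the hyperbolic ball. By conformal invariance of the Dirichlet integral, the integral of `|f'|²`
over the hyperbolic ball equals that of `|g'|²` over `|w| < r`, where `g = f ∘ mobius z₀`. The area
mean value property of the holomorphic function `g'²` bounds the latter from below by
`π r² |g'(0)|² = π r² |f'(z₀)|² (1 - |z₀|²)²`. -/

open MeasureTheory Metric Real Set ComplexConjugate

section MeanValue

variable {E : Type*} [NormedAddCommGroup E] [NormedSpace ℂ E]

theorem setIntegral_ball_eq_integral_circleMap (f : ℂ → E) (c : ℂ) (r : ℝ) :
    ∫ z in ball c r, f z = ∫ p in Ioo 0 r ×ˢ Ioo (-π) π, p.1 • f (circleMap c p.1 p.2) := by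
  have hball (z : ℂ) :
      (ball c r).indicator f (c + z) = (ball 0 r).indicator (fun z ↦ f (c + z)) z := by
    by_cases hz : z ∈ ball (0 : ℂ) r
    · rw [indicator_of_mem hz, indicator_of_mem (by simpa using hz)]
    · rw [indicator_of_notMem hz, indicator_of_notMem (by simpa using hz)]
  rw [← integral_indicator measurableSet_ball,
    ← integral_add_left_eq_self ((ball c r).indicator f) c, funext hball,
    ← Complex.integral_comp_polarCoord_symm, polarCoord_target,
    ← integral_indicator (measurableSet_Ioi.prod measurableSet_Ioo),
    ← integral_indicator (measurableSet_Ioo.prod measurableSet_Ioo)]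
  congr 1 with p
  by_cases hp : 0 < p.1
  · have hmem : Complex.polarCoord.symm p ∈ ball 0 r ↔ p.1 < r := by
      rw [mem_ball_zero_iff, Complex.norm_polarCoord_symm, abs_of_pos hp]
    have hcircle : c + Complex.polarCoord.symm p = circleMap c p.1 p.2 := by
      simp [circleMap, Complex.exp_mul_I]
    simp only [indicator_apply, mem_prod, mem_Ioi, mem_Ioo, hp, true_and, ← hcircle]
    split_ifs <;> simp_all
  · simp [hp]

theorem integral_Ioo_circleMap_eq_circleAverage (f : ℂ → E) (c : ℂ) (ρ : ℝ) :
    ∫ θ in Ioo (-π) π, f (circleMap c ρ θ) = (2 * π) • circleAverage f c ρ := by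
  rw [circleAverage_eq_integral_add (-π), smul_inv_smul₀ (by positivity),
    intervalIntegral.integral_comp_add_right (fun θ ↦ f (circleMap c ρ θ)), zero_add,
    intervalIntegral.integral_of_le (by linarith [pi_pos]), integral_Ioc_eq_integral_Ioo]
  ring_nf

theorem DiffContOnCl.setIntegral_ball_eq_smul [CompleteSpace E] {f : ℂ → E} {c : ℂ} {r : ℝ}
    (hr : 0 < r) (hf : DiffContOnCl ℂ f (ball c r)) :
    ∫ z in ball c r, f z = (π * r ^ 2) • f c := by
  have hcont : ContinuousOn (fun p : ℝ × ℝ ↦ p.1 • f (circleMap c p.1 p.2))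
      (Icc 0 r ×ˢ Icc (-π) π) := by
    refine continuousOn_fst.smul (hf.continuousOn.comp (by unfold circleMap; fun_prop) ?_)
    rintro p ⟨hρ, -⟩
    rw [closure_ball c hr.ne']
    exact closedBall_subset_closedBall hρ.2 (circleMap_mem_closedBall c hρ.1 _)
  have hint : IntegrableOn (fun p : ℝ × ℝ ↦ p.1 • f (circleMap c p.1 p.2))
      (Ioo 0 r ×ˢ Ioo (-π) π) :=
    (hcont.integrableOn_compact (isCompact_Icc.prod isCompact_Icc)).mono_set
      (prod_mono Ioo_subset_Icc_self Ioo_subset_Icc_self)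
  have hcircle : ∀ ρ ∈ Ioo 0 r,
      ∫ θ in Ioo (-π) π, ρ • f (circleMap c ρ θ) = (2 * π * ρ) • f c := by
    intro ρ hρ
    have hρ' : DiffContOnCl ℂ f (ball c |ρ|) :=
      hf.mono (ball_subset_ball ((abs_of_pos hρ.1).trans_le hρ.2.le))
    rw [integral_smul, integral_Ioo_circleMap_eq_circleAverage, hρ'.circleAverage, smul_smul,
      mul_comm ρ]
  rw [setIntegral_ball_eq_integral_circleMap, Measure.volume_eq_prod,
    setIntegral_prod _ (by rwa [← Measure.volume_eq_prod]),
    setIntegral_congr_fun measurableSet_Ioo hcircle, integral_smul_const,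
    integral_Ioc_eq_integral_Ioo.symm, ← intervalIntegral.integral_of_le hr.le,
    intervalIntegral.integral_const_mul, integral_id]
  congr 1
  ring

theorem DiffContOnCl.pi_mul_sq_mul_sq_norm_le_setIntegral_ball {f : ℂ → ℂ} {c : ℂ} {r : ℝ}
    (hr : 0 < r) (hf : DiffContOnCl ℂ f (ball c r)) :
    π * r ^ 2 * ‖f c‖ ^ 2 ≤ ∫ z in ball c r, ‖f z‖ ^ 2 :=
  calc π * r ^ 2 * ‖f c‖ ^ 2 = ‖∫ z in ball c r, f z • f z‖ := by
        rw [(hf.smul hf).setIntegral_ball_eq_smul hr, norm_smul, norm_smul, Real.norm_of_nonneg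
          (by positivity : (0 : ℝ) ≤ π * r ^ 2), sq ‖f c‖]
    _ ≤ ∫ z in ball c r, ‖f z • f z‖ := norm_integral_le_integral_norm _
    _ = ∫ z in ball c r, ‖f z‖ ^ 2 := by simp only [norm_smul, sq]

end MeanValue

theorem det_restrictScalars_toSpanSingleton (a : ℂ) :
    ((ContinuousLinearMap.toSpanSingleton ℂ a).restrictScalars ℝ).det = ‖a‖ ^ 2 := by
  rw [ContinuousLinearMap.det, ContinuousLinearMap.coe_restrictScalars,
    LinearMap.det_restrictScalars]
  simp [Algebra.norm_complex_apply, Complex.sq_norm]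

theorem setIntegral_image_eq_setIntegral_sq_norm_deriv_smul {F : Type*} [NormedAddCommGroup F]
    [NormedSpace ℝ F] {φ φ' : ℂ → ℂ} {s : Set ℂ}
    (hs : MeasurableSet s) (hφ : ∀ z ∈ s, HasDerivWithinAt φ (φ' z) s z) (hinj : InjOn φ s)
    (g : ℂ → F) :
    ∫ z in φ '' s, g z = ∫ z in s, ‖φ' z‖ ^ 2 • g (φ z) := by
  rw [integral_image_eq_integral_abs_det_fderiv_smul volume hs
    (fun z hz ↦ ((hφ z hz).hasFDerivWithinAt.restrictScalars ℝ)) hinj]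
  simp only [det_restrictScalars_toSpanSingleton, abs_pow, abs_norm]

theorem setIntegral_image_sq_norm_deriv {f φ : ℂ → ℂ} {s : Set ℂ} (hs : IsOpen s)
    (hφ : DifferentiableOn ℂ φ s) (hinj : InjOn φ s) (hf : ∀ z ∈ s, DifferentiableAt ℂ f (φ z)) :
    ∫ z in φ '' s, ‖deriv f z‖ ^ 2 = ∫ z in s, ‖deriv (f ∘ φ) z‖ ^ 2 := by
  have hφ' (z : ℂ) (hz : z ∈ s) : DifferentiableAt ℂ φ z := hφ.differentiableAt (hs.mem_nhds hz)
  rw [setIntegral_image_eq_setIntegral_sq_norm_deriv_smul hs.measurableSet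
    (fun z hz ↦ (hφ' z hz).hasDerivAt.hasDerivWithinAt) hinj]
  refine setIntegral_congr_fun hs.measurableSet fun z hz ↦ ?_
  rw [deriv_comp z (hf z hz) (hφ' z hz), norm_mul, smul_eq_mul]
  ring

noncomputable def mobius (a w : ℂ) : ℂ := (w + a) / (1 + conj a * w)

section Mobius

variable {a w : ℂ}

theorem one_add_conj_mul_ne_zero (ha : ‖a‖ < 1) (hw : ‖w‖ ≤ 1) : 1 + conj a * w ≠ 0 := by
  intro h
  have h1 : ‖conj a * w‖ = 1 := by rw [eq_neg_of_add_eq_zero_right h, norm_neg, norm_one]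
  rw [norm_mul, Complex.norm_conj] at h1
  nlinarith [norm_nonneg a, norm_nonneg w]

theorem normSq_one_add_conj_mul_sub_normSq_add (a w : ℂ) :
    Complex.normSq (1 + conj a * w) - Complex.normSq (w + a) =
      (1 - Complex.normSq a) * (1 - Complex.normSq w) := by
  simp only [Complex.normSq_apply, Complex.add_re, Complex.add_im, Complex.mul_re,
    Complex.mul_im, Complex.one_re, Complex.one_im, Complex.conj_re, Complex.conj_im]
  ring

theorem norm_mobius_lt_one (ha : ‖a‖ < 1) (hw : ‖w‖ < 1) : ‖mobius a w‖ < 1 := by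
  have hden := one_add_conj_mul_ne_zero ha hw.le
  have hlt : Complex.normSq (w + a) < Complex.normSq (1 + conj a * w) := by
    have ha2 : Complex.normSq a < 1 := by
      rw [← Complex.sq_norm]; exact pow_lt_one₀ (norm_nonneg a) ha two_ne_zero
    have hw2 : Complex.normSq w < 1 := by
      rw [← Complex.sq_norm]; exact pow_lt_one₀ (norm_nonneg w) hw two_ne_zero
    nlinarith [normSq_one_add_conj_mul_sub_normSq_add a w, mul_pos (sub_pos.2 ha2) (sub_pos.2 hw2)]
  rw [mobius, norm_div, div_lt_one (norm_pos_iff.mpr hden)]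
  rwa [← Complex.sq_norm, ← Complex.sq_norm, sq_lt_sq₀ (norm_nonneg _) (norm_nonneg _)] at hlt

theorem mapsTo_mobius_ball (ha : ‖a‖ < 1) : MapsTo (mobius a) (ball 0 1) (ball 0 1) :=
  fun _ hw ↦ mem_ball_zero_iff.2 (norm_mobius_lt_one ha (mem_ball_zero_iff.1 hw))

theorem mobius_zero (a : ℂ) : mobius a 0 = a := by simp [mobius]

theorem mobius_neg_apply (a z : ℂ) : mobius (-a) z = (z - a) / (1 - conj a * z) := by
  simp [mobius, sub_eq_add_neg]

theorem mobius_neg_mobius (ha : ‖a‖ < 1) (hw : ‖w‖ ≤ 1) : mobius (-a) (mobius a w) = w := by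
  have hden := one_add_conj_mul_ne_zero ha hw
  have hnorm : 1 - conj a * a ≠ 0 := by
    simpa [← sub_eq_add_neg] using one_add_conj_mul_ne_zero (a := -a) (by simpa using ha) ha.le
  have hnum : mobius a w - a = w * (1 - conj a * a) / (1 + conj a * w) := by
    rw [eq_div_iff hden, mobius, sub_mul, div_mul_cancel₀ _ hden]
    ring
  have hden' : 1 - conj a * mobius a w = (1 - conj a * a) / (1 + conj a * w) := by
    rw [eq_div_iff hden, mobius, sub_mul, one_mul, mul_assoc, div_mul_cancel₀ _ hden]
    ring
  rw [mobius_neg_apply, hnum, hden', mul_div_assoc,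
    mul_div_cancel_right₀ _ (div_ne_zero hnorm hden)]

theorem hasDerivAt_mobius (hden : 1 + conj a * w ≠ 0) :
    HasDerivAt (mobius a) ((1 - conj a * a) / (1 + conj a * w) ^ 2) w := by
  refine (((hasDerivAt_id' w).add_const a).div
    (((hasDerivAt_id' w).const_mul (conj a)).const_add 1) hden).congr_deriv ?_
  ring

theorem injOn_mobius (ha : ‖a‖ < 1) : InjOn (mobius a) (ball 0 1) :=
  LeftInvOn.injOn fun _ hw ↦ mobius_neg_mobius ha (mem_ball_zero_iff.1 hw).le

theorem image_mobius_ball (ha : ‖a‖ < 1) {r : ℝ} (hr : r ≤ 1) :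
    mobius a '' ball 0 r = {z | z ∈ ball 0 1 ∧ ‖mobius (-a) z‖ < r} := by
  ext z
  simp only [mem_image, mem_ball_zero_iff]
  constructor
  · rintro ⟨w, hw, rfl⟩
    exact ⟨norm_mobius_lt_one ha (hw.trans_le hr),
      by rwa [mobius_neg_mobius ha (hw.trans_le hr).le]⟩
  · rintro ⟨hz, hzr⟩
    refine ⟨mobius (-a) z, hzr, ?_⟩
    simpa using mobius_neg_mobius (a := -a) (by simpa using ha) hz.le

theorem differentiableOn_mobius (ha : ‖a‖ < 1) : DifferentiableOn ℂ (mobius a) (ball 0 1) :=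
  fun _ hw ↦ (hasDerivAt_mobius (one_add_conj_mul_ne_zero ha
    (mem_ball_zero_iff.1 hw).le)).differentiableAt.differentiableWithinAt

theorem hasDerivAt_mobius_zero (a : ℂ) : HasDerivAt (mobius a) (1 - ‖a‖ ^ 2 : ℂ) 0 := by
  convert hasDerivAt_mobius (a := a) (w := 0) (by simp) using 1
  simp [Complex.conj_mul']

theorem deriv_comp_mobius_zero {f : ℂ → ℂ} (hf : DifferentiableAt ℂ f a) :
    deriv (f ∘ mobius a) 0 = deriv f a * (1 - ‖a‖ ^ 2 : ℂ) := by
  rw [← mobius_zero a] at hf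
  rw [(hf.hasDerivAt.comp 0 (hasDerivAt_mobius_zero a)).deriv, mobius_zero]

theorem setIntegral_image_mobius_ball_sq_norm_deriv {f : ℂ → ℂ} (ha : ‖a‖ < 1) {r : ℝ}
    (hr : r ≤ 1) (hf : DifferentiableOn ℂ f (ball 0 1)) :
    ∫ z in mobius a '' ball 0 r, ‖deriv f z‖ ^ 2 = ∫ w in ball 0 r, ‖deriv (f ∘ mobius a) w‖ ^ 2 :=
  have hrB : ball (0 : ℂ) r ⊆ ball 0 1 := ball_subset_ball hr
  setIntegral_image_sq_norm_deriv isOpen_ball ((differentiableOn_mobius ha).mono hrB)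
    ((injOn_mobius ha).mono hrB) fun _ hw ↦
      hf.differentiableAt (isOpen_ball.mem_nhds (mapsTo_mobius_ball ha (hrB hw)))

end Mobius

theorem stmt12_general (f : ℂ → ℂ)
    (hf : AnalyticOn ℂ f (ball (0:ℂ) 1))
    (z₀ : ℂ) (hz₀ : z₀ ∈ ball (0:ℂ) 1) (δ : ℝ) (hδ : 0 < δ) :
    Real.tanh (δ / 2) * (‖deriv f z₀‖ * (1 - ‖z₀‖ ^ 2) / 2) ≤
      Real.sqrt ((1 / (4 * π)) *
        ∫ z in {z : ℂ | z ∈ ball (0:ℂ) 1 ∧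
          ‖(z - z₀) / (1 - (starRingEnd ℂ) z₀ * z)‖ < Real.tanh (δ / 2)},
          ‖deriv f z‖ ^ 2) := by
  have hr0 : 0 < tanh (δ / 2) := by
    rw [tanh_eq_sinh_div_cosh]
    exact div_pos (sinh_pos_iff.2 (half_pos hδ)) (cosh_pos _)
  set r := tanh (δ / 2)
  have hz : ‖z₀‖ < 1 := mem_ball_zero_iff.1 hz₀
  have hfd : DifferentiableOn ℂ f (ball 0 1) := hf.differentiableOn
  have hF : DifferentiableOn ℂ (f ∘ mobius z₀) (ball 0 1) :=
    hfd.comp (differentiableOn_mobius hz) (mapsTo_mobius_ball hz)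
  have hmean := ((hF.deriv isOpen_ball).diffContOnCl_ball
    (closedBall_subset_ball (tanh_lt_one _))).pi_mul_sq_mul_sq_norm_le_setIntegral_ball hr0
  have hderiv : ‖deriv (f ∘ mobius z₀) 0‖ = ‖deriv f z₀‖ * (1 - ‖z₀‖ ^ 2) := by
    rw [deriv_comp_mobius_zero (hfd.differentiableAt (isOpen_ball.mem_nhds hz₀)), norm_mul]
    norm_cast
    rw [Real.norm_of_nonneg (by nlinarith [norm_nonneg z₀])]
  simp_rw [← mobius_neg_apply]
  rw [← image_mobius_ball hz (tanh_lt_one _).le,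
    setIntegral_image_mobius_ball_sq_norm_deriv hz (tanh_lt_one _).le hfd]
  refine le_sqrt_of_sq_le ?_
  rw [hderiv] at hmean
  calc (r * (‖deriv f z₀‖ * (1 - ‖z₀‖ ^ 2) / 2)) ^ 2
      = 1 / (4 * π) * (π * r ^ 2 * (‖deriv f z₀‖ * (1 - ‖z₀‖ ^ 2)) ^ 2) := by
        field_simp
        ring
    _ ≤ _ := by gcongr

theorem stmt12 (f : ℂ → ℂ)
    (hf : AnalyticOn ℂ f (ball (0:ℂ) 1))
    (hA : IntegrableOn (fun z => ‖deriv f z‖ ^ 2) (ball (0:ℂ) 1))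
    (z₀ : ℂ) (hz₀ : z₀ ∈ ball (0:ℂ) 1) (δ : ℝ) (hδ : 0 < δ) :
    Real.tanh (δ / 2) * (‖deriv f z₀‖ * (1 - ‖z₀‖ ^ 2) / 2) ≤
      Real.sqrt ((1 / (4 * π)) *
        ∫ z in {z : ℂ | z ∈ ball (0:ℂ) 1 ∧
          ‖(z - z₀) / (1 - (starRingEnd ℂ) z₀ * z)‖ < Real.tanh (δ / 2)},
          ‖deriv f z‖ ^ 2) :=
  stmt12_general f hf z₀ hz₀ δ hδ
end

section
/- Let f₀, f_∞ : 𝔻 → ℂ be analytic with δ² < |f₀(z)|² + |f_∞(z)|² ≤ 1 on 𝔻 for some δ > 0, with f_∞ nowhere zero, and set f = f₀/f_∞. Then along any radial hyperbolic geodesic γ(t) = tanh(t/2)e^{iθ}, the spherical length of the image of γ[0,ρ₀] satisfies L_S(ρ₀) = ∫_0^{ρ₀} (2|f'(γ(t))|/(1+|f(γ(t))|²)) · (1−|γ(t)|²)/2 dt ≤ (2/δ) ρ₀, i.e. L_S(ρ₀) = O(ρ₀). -/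
/-!
For the Wronskian `W = f_∞ f₀' - f_∞' f₀`, the spherical derivative of `f = f₀ / f_∞` is
`2 |W| / (|f₀|² + |f_∞|²)`. At `z ∈ 𝔻`, `W(z)` is the derivative at `z` of
`w ↦ f_∞(z) f₀(w) - f₀(z) f_∞(w)`, which by Cauchy–Schwarz is bounded on `𝔻` by
`s = √(|f₀(z)|² + |f_∞(z)|²)`; the Cauchy estimate on the disc of radius `(1 - |z|²) / 2` about `z`
gives `|W(z)| (1 - |z|²) / 2 ≤ s`. So the integrand is at most `2 / s < 2 / δ` everywhere.
-/

open MeasureTheory Metric Real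

open scoped Topology

noncomputable def wronskian (f g : ℂ → ℂ) (z : ℂ) : ℂ :=
  f z * deriv g z - deriv f z * g z

noncomputable def sphericalDeriv (f : ℂ → ℂ) (z : ℂ) : ℝ :=
  2 * ‖deriv f z‖ / (1 + ‖f z‖ ^ 2)

lemma norm_mul_sub_mul_le_sqrt_mul_sqrt (a b c d : ℂ) :
    ‖b * c - a * d‖ ≤ √(‖a‖ ^ 2 + ‖b‖ ^ 2) * √(‖c‖ ^ 2 + ‖d‖ ^ 2) := by
  rw [← Real.sqrt_mul (by positivity)]
  refine (norm_sub_le _ _).trans (Real.le_sqrt_of_sq_le ?_)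
  rw [norm_mul, norm_mul]
  nlinarith [sq_nonneg (‖b‖ * ‖d‖ - ‖a‖ * ‖c‖)]

lemma norm_wronskian_le {f₀ f_inf : ℂ → ℂ} {z : ℂ} {r : ℝ} (hr : 0 < r)
    (h₀ : DifferentiableOn ℂ f₀ (closedBall z r)) (hinf : DifferentiableOn ℂ f_inf (closedBall z r))
    (hub : ∀ w ∈ sphere z r, ‖f₀ w‖ ^ 2 + ‖f_inf w‖ ^ 2 ≤ 1) :
    ‖wronskian f_inf f₀ z‖ ≤ √(‖f₀ z‖ ^ 2 + ‖f_inf z‖ ^ 2) / r := by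
  have hz : closedBall z r ∈ 𝓝 z := closedBall_mem_nhds z hr
  have hd₀ := (h₀.differentiableAt hz).hasDerivAt
  have hdinf := (hinf.differentiableAt hz).hasDerivAt
  rw [wronskian, mul_comm (deriv f_inf z),
    ← ((hd₀.const_mul (f_inf z)).sub (hdinf.const_mul (f₀ z))).deriv]
  refine Complex.norm_deriv_le_of_forall_mem_sphere_norm_le hr ?_ fun w hw => ?_
  · refine DifferentiableOn.diffContOnCl ?_
    rw [closure_ball z hr.ne']
    exact (h₀.const_mul _).sub (hinf.const_mul _)
  · calc ‖f_inf z * f₀ w - f₀ z * f_inf w‖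
        ≤ √(‖f₀ z‖ ^ 2 + ‖f_inf z‖ ^ 2) * √(‖f₀ w‖ ^ 2 + ‖f_inf w‖ ^ 2) :=
          norm_mul_sub_mul_le_sqrt_mul_sqrt _ _ _ _
      _ ≤ √(‖f₀ z‖ ^ 2 + ‖f_inf z‖ ^ 2) :=
          mul_le_of_le_one_right (Real.sqrt_nonneg _) (Real.sqrt_le_one.mpr (hub w hw))

lemma sphericalDeriv_eq_of_eventuallyEq_div {f f₀ f_inf : ℂ → ℂ} {z : ℂ}
    (hf : f =ᶠ[𝓝 z] fun w => f₀ w / f_inf w) (h₀ : DifferentiableAt ℂ f₀ z)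
    (hinf : DifferentiableAt ℂ f_inf z) (hne : f_inf z ≠ 0) :
    sphericalDeriv f z = 2 * ‖wronskian f_inf f₀ z‖ / (‖f₀ z‖ ^ 2 + ‖f_inf z‖ ^ 2) := by
  have hb : 0 < ‖f_inf z‖ := norm_pos_iff.mpr hne
  rw [sphericalDeriv, wronskian, hf.deriv_eq, deriv_fun_div h₀ hinf hne, hf.eq_of_nhds,
    norm_div, norm_div, norm_pow, div_pow, mul_comm (deriv f₀ z)]
  field_simp
  ring

lemma sphericalDeriv_mul_le {f f₀ f_inf : ℂ → ℂ} {z : ℂ} {δ : ℝ} (hδ : 0 < δ)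
    (hz : z ∈ ball (0 : ℂ) 1) (h₀ : DifferentiableOn ℂ f₀ (ball (0 : ℂ) 1))
    (hinf : DifferentiableOn ℂ f_inf (ball (0 : ℂ) 1)) (hne : f_inf z ≠ 0)
    (hub : ∀ w ∈ ball (0 : ℂ) 1, ‖f₀ w‖ ^ 2 + ‖f_inf w‖ ^ 2 ≤ 1)
    (hlb : δ ^ 2 < ‖f₀ z‖ ^ 2 + ‖f_inf z‖ ^ 2) (hf : f =ᶠ[𝓝 z] fun w => f₀ w / f_inf w) :
    sphericalDeriv f z * ((1 - ‖z‖ ^ 2) / 2) ≤ 2 / δ := by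
  have hz1 : ‖z‖ < 1 := mem_ball_zero_iff.mp hz
  have hR : 0 < (1 - ‖z‖ ^ 2) / 2 := by nlinarith [norm_nonneg z]
  have hsub : closedBall z ((1 - ‖z‖ ^ 2) / 2) ⊆ ball (0 : ℂ) 1 :=
    closedBall_subset_ball' (by rw [dist_zero_right]; nlinarith [norm_nonneg z])
  set R := (1 - ‖z‖ ^ 2) / 2
  have hW := norm_wronskian_le hR (h₀.mono hsub) (hinf.mono hsub)
    fun w hw => hub w (hsub (sphere_subset_closedBall hw))
  have hnhds : ball (0 : ℂ) 1 ∈ 𝓝 z := isOpen_ball.mem_nhds hz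
  rw [sphericalDeriv_eq_of_eventuallyEq_div hf (h₀.differentiableAt hnhds)
    (hinf.differentiableAt hnhds) hne]
  set s := √(‖f₀ z‖ ^ 2 + ‖f_inf z‖ ^ 2)
  have hs : s ^ 2 = ‖f₀ z‖ ^ 2 + ‖f_inf z‖ ^ 2 := Real.sq_sqrt (by positivity)
  have hδs : δ < s := (Real.lt_sqrt hδ.le).mpr hlb
  rw [← hs]
  calc 2 * ‖wronskian f_inf f₀ z‖ / s ^ 2 * R
      ≤ 2 * (s / R) / s ^ 2 * R := by gcongr
    _ = 2 / s := by field_simp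
    _ ≤ 2 / δ := by gcongr

theorem stmt15 (f₀ f_inf : ℂ → ℂ) (δ : ℝ) (hδ : 0 < δ) (θ : ℝ)
    (h₀ : AnalyticOn ℂ f₀ (ball (0:ℂ) 1))
    (hinf : AnalyticOn ℂ f_inf (ball (0:ℂ) 1))
    (hne : ∀ z ∈ ball (0:ℂ) 1, f_inf z ≠ 0)
    (hub : ∀ z ∈ ball (0:ℂ) 1, ‖f₀ z‖ ^ 2 + ‖f_inf z‖ ^ 2 ≤ 1)
    (hlb : ∀ z ∈ ball (0:ℂ) 1, δ ^ 2 < ‖f₀ z‖ ^ 2 + ‖f_inf z‖ ^ 2)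
    (f : ℂ → ℂ) (hfdef : ∀ z ∈ ball (0:ℂ) 1, f z = f₀ z / f_inf z)
    (γ : ℝ → ℂ)
    (hγ : ∀ t, γ t = (Real.tanh (t / 2) : ℂ) * Complex.exp (θ * Complex.I)) :
    ∀ ρ₀ : ℝ, 0 ≤ ρ₀ →
      (∫ t in (0:ℝ)..ρ₀,
          (2 * ‖deriv f (γ t)‖ / (1 + ‖f (γ t)‖ ^ 2)) * ((1 - ‖γ t‖ ^ 2) / 2))
        ≤ (2 / δ) * ρ₀ := by
  intro ρ₀ hρ₀
  have hγ_mem (t : ℝ) : γ t ∈ ball (0 : ℂ) 1 := by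
    rw [mem_ball_zero_iff, hγ t, norm_mul, Complex.norm_exp_ofReal_mul_I, mul_one,
      Complex.norm_real, Real.norm_eq_abs]
    exact Real.abs_tanh_lt_one _
  have hbound (t : ℝ) :
      ‖2 * ‖deriv f (γ t)‖ / (1 + ‖f (γ t)‖ ^ 2) * ((1 - ‖γ t‖ ^ 2) / 2)‖ ≤ 2 / δ := by
    have hγ1 : ‖γ t‖ < 1 := mem_ball_zero_iff.mp (hγ_mem t)
    rw [Real.norm_of_nonneg (mul_nonneg (by positivity) (by nlinarith [norm_nonneg (γ t)]))]
    exact sphericalDeriv_mul_le hδ (hγ_mem t) h₀.differentiableOn hinf.differentiableOn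
      (hne _ (hγ_mem t)) hub (hlb _ (hγ_mem t))
      (Filter.eventually_of_mem (isOpen_ball.mem_nhds (hγ_mem t)) hfdef)
  calc (∫ t in (0:ℝ)..ρ₀, 2 * ‖deriv f (γ t)‖ / (1 + ‖f (γ t)‖ ^ 2) * ((1 - ‖γ t‖ ^ 2) / 2))
      ≤ ‖∫ t in (0:ℝ)..ρ₀, 2 * ‖deriv f (γ t)‖ / (1 + ‖f (γ t)‖ ^ 2) * ((1 - ‖γ t‖ ^ 2) / 2)‖ :=
        Real.le_norm_self _
    _ ≤ 2 / δ * |ρ₀ - 0| := intervalIntegral.norm_integral_le_of_norm_le_const fun t _ => hbound t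
    _ = 2 / δ * ρ₀ := by rw [sub_zero, abs_of_nonneg hρ₀]
end
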